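/- Suppose the level set X := {x ∈ dom F : F(x) ≤ F(x⁰)} is compact, and let {(x^k, y^k, z^k, c_k)} be generated by AMPDA. Then for all k ≥ 1, Q(x^{k+1}, y^k, z^k, c_{k+1}) + (σ/2)‖x^{k+1} − x^k‖² ≤ Q(x^k, y^{k−1}, z^{k−1}, c_k). -/

import Mathlib

open Filter Topology Set
open scoped Classical

noncomputable section

/-- `En n` is the Euclidean space `ℝⁿ`. -/
abbrev En (n : ℕ) := EuclideanSpace ℝ (Fin n)

variable {n : ℕ}

/-- `Ω := {x : g x ≠ 0}`. -/
def Omeg (g : En n → ℝ) : Set (En n) := {x | g x ≠ 0}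

/-- The extended objective `F` of the fractional program (P), with `h = h₁ - h₂`:
`F x = f x / g x + (h₁ x - h₂ x)` on `Ω ∩ C` and `+∞` elsewhere. -/
def Fobj (f g h₁ h₂ : En n → ℝ) (C : Set (En n)) (x : En n) : EReal :=
  if x ∈ Omeg g ∩ C then ((f x / g x + (h₁ x - h₂ x) : ℝ) : EReal) else ⊤

/-- The objective `F̃` of the min-max reformulation:
`F̃(x,c) = 2 c f x - c² f x g x + h x + ι_{Ω∩C}(x)`. -/
def Ftil (f g h₁ h₂ : En n → ℝ) (C : Set (En n)) (x : En n) (c : ℝ) : EReal :=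
  if x ∈ Omeg g ∩ C then
    ((2 * c * f x - c ^ 2 * f x * g x + (h₁ x - h₂ x) : ℝ) : EReal) else ⊤

/-- The Fréchet subdifferential of an extended-real-valued function on `ℝⁿ`. -/
def fsubdiff (φ : En n → EReal) (x : En n) : Set (En n) :=
  {y | φ x ≠ ⊤ ∧ ∀ ε : ℝ, 0 < ε →
      ∀ᶠ z in 𝓝 x, φ x + (((inner ℝ y (z - x) : ℝ) - ε * ‖z - x‖ : ℝ) : EReal) ≤ φ z}

/-- The convex (classical) subdifferential of a real-valued function on `ℝⁿ`. -/
def convSubdiff (φ : En n → ℝ) (x : En n) : Set (En n) :=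
  {y | ∀ z, φ x + (inner ℝ y (z - x) : ℝ) ≤ φ z}

/-- The convex subdifferential of an extended-real-valued function on `ℝⁿ`. -/
def eSubdiff (φ : En n → EReal) (x : En n) : Set (En n) :=
  {y | ∀ z, φ x + (((inner ℝ y (z - x) : ℝ)) : EReal) ≤ φ z}

/-- The convex conjugate of a real-valued function. -/
def conjF (φ : En n → ℝ) (y : En n) : EReal :=
  ⨆ x : En n, (((inner ℝ x y : ℝ) - φ x : ℝ) : EReal)

/-- The auxiliary function `Q`. -/
def Qaux (f g h₁ h₂ : En n → ℝ) (C : Set (En n)) (x y z : En n) (c : ℝ) : EReal :=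
  if x ∈ C ∧ conjF g y ≠ ⊤ ∧ conjF h₂ z ≠ ⊤ then
    ((2 * c * f x + c ^ 2 * f x * ((conjF g y).toReal - (inner ℝ x y : ℝ))
        + h₁ x + (conjF h₂ z).toReal - (inner ℝ x z : ℝ) : ℝ) : EReal)
  else ⊤

/-- The proximal operator (as a set) of `t • (f + ι_C)` at `v`. -/
def proxfC (f : En n → ℝ) (C : Set (En n)) (t : ℝ) (v : En n) : Set (En n) :=
  {z | z ∈ C ∧ ∀ w ∈ C, t * f z + ‖v - z‖ ^ 2 / 2 ≤ t * f w + ‖v - w‖ ^ 2 / 2}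

/-- The standing assumptions on the data of problem (P). -/
def StandingAssumptions (f g h₁ h₂ : En n → ℝ) (C : Set (En n)) : Prop :=
  (∀ x, 0 ≤ f x) ∧ (∀ x, 0 ≤ g x) ∧
  LowerSemicontinuous f ∧ LowerSemicontinuous g ∧
  LowerSemicontinuous (fun x => h₁ x - h₂ x) ∧
  IsClosed C ∧ (Omeg g ∩ C).Nonempty ∧
  (∀ x ∈ Omeg g, ∃ s ∈ 𝓝 x, ∃ K : NNReal, LipschitzOnWith K f s) ∧
  ConvexOn ℝ univ g ∧ ConvexOn ℝ univ h₂ ∧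
  (∀ x ∈ Omeg g, ∃ δ > 0, (∀ y ∈ Metric.ball x δ, HasGradientAt h₁ (gradient h₁ y) y) ∧
      ∃ K : NNReal, LipschitzOnWith K (gradient h₁) (Metric.ball x δ))

/-- An admissible run of the alternating maximization proximal descent algorithm (AMPDA),
including the backtracking line-search data: at iteration `k`, the trial points
`trial k j` are computed with stepsizes `αtil k * γ ^ j`, the trials `j < J k` fail the
acceptance test, and `x (k+1) = trial k (J k)` is accepted. -/
structure AMPDA (f g h₁ h₂ : En n → ℝ) (C : Set (En n)) (x0 : En n)
    (αlo αhi σ γ : ℝ) : Type where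
  x : ℕ → En n
  y : ℕ → En n
  z : ℕ → En n
  c : ℕ → ℝ
  αtil : ℕ → ℝ
  J : ℕ → ℕ
  trial : ℕ → ℕ → En n
  hx0 : x 0 = x0
  hc : ∀ k, c k = 1 / g (x k)
  hy : ∀ k, y k ∈ convSubdiff g (x k)
  hz : ∀ k, z k ∈ convSubdiff h₂ (x k)
  hαtil : ∀ k, αlo ≤ αtil k ∧ αtil k ≤ αhi
  htrial : ∀ k j, trial k j ∈ proxfC f C (αtil k * γ ^ j * c k)
      (x k - (αtil k * γ ^ j) • (gradient h₁ (x k) - z k - (c k ^ 2 * f (x k)) • y k))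
  hfail : ∀ k, ∀ j < J k, ¬ (trial k j ∈ Omeg g ∧
      Qaux f g h₁ h₂ C (trial k j) (y k) (z k) (1 / g (trial k j))
          + ((σ / 2 * ‖trial k j - x k‖ ^ 2 : ℝ) : EReal)
        ≤ Fobj f g h₁ h₂ C (x k))
  hstep : ∀ k, x (k + 1) = trial k (J k)
  hmem : ∀ k, x (k + 1) ∈ Omeg g
  haccept : ∀ k,
      Qaux f g h₁ h₂ C (x (k + 1)) (y k) (z k) (1 / g (x (k + 1)))
          + ((σ / 2 * ‖x (k + 1) - x k‖ ^ 2 : ℝ) : EReal)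
        ≤ Fobj f g h₁ h₂ C (x k)

/-- The accepted stepsize `α_k` of AMPDA at iteration `k`. -/
def AMPDA.step {f g h₁ h₂ : En n → ℝ} {C : Set (En n)} {x0 : En n} {αlo αhi σ γ : ℝ}
    (A : AMPDA f g h₁ h₂ C x0 αlo αhi σ γ) (k : ℕ) : ℝ := A.αtil k * γ ^ A.J k

/-- `x⋆` is a critical point of `F`. -/
def isCriticalPt (f g h₁ h₂ : En n → ℝ) (C : Set (En n)) (xs : En n) : Prop :=
  g xs ≠ 0 ∧
  ∃ u ∈ fsubdiff (fun x : En n => if x ∈ C then (((1 / g xs) * f x : ℝ) : EReal) else ⊤) xs,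
  ∃ ys ∈ convSubdiff g xs, ∃ zs ∈ convSubdiff h₂ xs,
    (0 : En n) = u - ((1 / g xs) ^ 2 * f xs) • ys + gradient h₁ xs - zs

/-- `xb` is an `ε`-critical point of `F`. -/
def epsCrit (f g h₁ h₂ : En n → ℝ) (C : Set (En n)) (ε : ℝ) (xb : En n) : Prop :=
  g xb ≠ 0 ∧ ∃ α : ℝ, 0 < α ∧ ∃ yb ∈ convSubdiff g xb, ∃ zb ∈ convSubdiff h₂ xb,
    (proxfC f C (α * (1 / g xb))
        (xb - α • (gradient h₁ xb - zb - ((1 / g xb) ^ 2 * f xb) • yb))).Nonempty ∧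
    Metric.infDist xb (proxfC f C (α * (1 / g xb))
        (xb - α • (gradient h₁ xb - zb - ((1 / g xb) ^ 2 * f xb) • yb))) ≤ ε

/-- The product space `ℝⁿ × ℝⁿ × ℝⁿ × ℝ` on which `Q` lives. -/
abbrev E4 (n : ℕ) := En n × En n × En n × ℝ

/-- The natural inner ℝ product on `ℝⁿ × ℝⁿ × ℝⁿ × ℝ`. -/
def inner4 (v w : E4 n) : ℝ :=
  (inner ℝ v.1 w.1 : ℝ) + (inner ℝ v.2.1 w.2.1 : ℝ) + (inner ℝ v.2.2.1 w.2.2.1 : ℝ)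
    + v.2.2.2 * w.2.2.2

/-- The Fréchet subdifferential of an extended-real-valued function on
`ℝⁿ × ℝⁿ × ℝⁿ × ℝ`. -/
def fsubdiff4 (φ : E4 n → EReal) (w : E4 n) : Set (E4 n) :=
  {v | φ w ≠ ⊤ ∧ ∀ ε : ℝ, 0 < ε →
      ∀ᶠ u in 𝓝 w, φ w + ((inner4 v (u - w) - ε * ‖u - w‖ : ℝ) : EReal) ≤ φ u}

/-- The limiting subdifferential of an extended-real-valued function on
`ℝⁿ × ℝⁿ × ℝⁿ × ℝ`. -/
def lsubdiff4 (φ : E4 n → EReal) (w : E4 n) : Set (E4 n) :=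
  {v | ∃ (u : ℕ → E4 n) (q : ℕ → E4 n), Tendsto u atTop (𝓝 w) ∧
      Tendsto (fun k => φ (u k)) atTop (𝓝 (φ w)) ∧ Tendsto q atTop (𝓝 v) ∧
      ∀ k, q k ∈ fsubdiff4 φ (u k)}

/-- The function `Q` as a function on the product space. -/
def QfunOf (f g h₁ h₂ : En n → ℝ) (C : Set (En n)) : E4 n → EReal :=
  fun w => Qaux f g h₁ h₂ C w.1 w.2.1 w.2.2.1 w.2.2.2

/-- The Kurdyka-Łojasiewicz property of `φ` at `w`. -/
def KLAt4 (φ : E4 n → EReal) (w : E4 n) : Prop :=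
  ∃ ε : EReal, 0 < ε ∧ ∃ δ : ℝ, 0 < δ ∧ ∃ ψ ψ' : ℝ → ℝ,
    ψ 0 = 0 ∧
    ContinuousOn ψ {t : ℝ | 0 ≤ t ∧ (t : EReal) < ε} ∧
    ConcaveOn ℝ {t : ℝ | 0 ≤ t ∧ (t : EReal) < ε} ψ ∧
    (∀ t : ℝ, 0 < t → (t : EReal) < ε → HasDerivAt ψ (ψ' t) t ∧ 0 < ψ' t) ∧
    ∀ u : E4 n, ‖u - w‖ < δ → φ w < φ u → φ u < φ w + ε →
      ∀ p ∈ lsubdiff4 φ u, 1 ≤ ψ' ((φ u - φ w).toReal) * ‖p‖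

/-- The ℓ¹-norm on `ℝⁿ`. -/
def l1 (x : En n) : ℝ := ∑ i, |x i|

/-- The ℓ²-norm on `ℝⁿ`. -/
def l2 (x : En n) : ℝ := ‖x‖

/-- `S_μ`, the set of vectors with at most `μ` nonzero entries. -/
def Smu (μ : ℕ) : Set (En n) := {z | {j | z j ≠ 0}.ncard ≤ μ}

/-- `h₁` for the robust signal recovery models: `(λ/2) ‖A x - b‖²`. -/
def h1L {m : ℕ} (A : En n →ₗ[ℝ] En m) (b : En m) (lam : ℝ) (x : En n) : ℝ :=
  lam / 2 * ‖A x - b‖ ^ 2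

/-- `h₂` for the robust signal recovery models:
`(λ/2) ‖T_μ (A x - b)‖² = (λ/2) (‖A x - b‖² - dist²(A x - b, S_μ))`. -/
def h2L {m : ℕ} (A : En n →ₗ[ℝ] En m) (b : En m) (lam : ℝ) (μ : ℕ) (x : En n) : ℝ :=
  lam / 2 * (‖A x - b‖ ^ 2 - (Metric.infDist (A x - b) (Smu μ)) ^ 2)

/-- The box constraint `{x : x̲ ≤ x ≤ x̄}`. -/
def box (xlo xhi : En n) : Set (En n) := {x | ∀ i, xlo i ≤ x i ∧ x i ≤ xhi i}


/-!
The line search accepts `x^{k+1}` only if `Q(x^{k+1}, y^k, z^k, c_{k+1}) + (σ/2)‖x^{k+1} - x^k‖²`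
is at most `F(x^k)`. Conversely `F(x) ≤ Q(x, y, z, 1/g(x))` for every `x ∈ Ω` and all `y, z`:
by Fenchel–Young, `g*(y) - ⟨x,y⟩ ≥ -g(x)` and `h₂*(z) - ⟨x,z⟩ ≥ -h₂(x)`, and with `c = 1/g(x)`
one has `2 c f(x) - c² f(x) g(x) = f(x)/g(x)`. Chaining the two inequalities at `x = x^k` gives
the descent of `Q`.
-/

lemma inner_sub_le_toReal_conjF (φ : En n → ℝ) {y : En n} (hy : conjF φ y ≠ ⊤) (x : En n) :
    inner ℝ x y - φ x ≤ (conjF φ y).toReal := by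
  have h : ((inner ℝ x y - φ x : ℝ) : EReal) ≤ conjF φ y :=
    le_iSup (fun w : En n => ((inner ℝ w y - φ w : ℝ) : EReal)) x
  lift conjF φ y to ℝ using ⟨hy, ne_bot_of_le_ne_bot (EReal.coe_ne_bot _) h⟩ with r
  exact_mod_cast h

lemma Fobj_le_Qaux {f g h₁ h₂ : En n → ℝ} {C : Set (En n)} {x : En n} (hx : x ∈ Omeg g)
    (hf : 0 ≤ f x) (y z : En n) :
    Fobj f g h₁ h₂ C x ≤ Qaux f g h₁ h₂ C x y z (1 / g x) := by
  unfold Qaux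
  split_ifs with hQ
  · obtain ⟨hC, hy, hz⟩ := hQ
    rw [Fobj, if_pos ⟨hx, hC⟩, EReal.coe_le_coe_iff]
    have hgx : g x ≠ 0 := hx
    have hconj_g : -g x ≤ (conjF g y).toReal - inner ℝ x y := by
      linarith [inner_sub_le_toReal_conjF g hy x]
    have hconj_h : -h₂ x ≤ (conjF h₂ z).toReal - inner ℝ x z := by
      linarith [inner_sub_le_toReal_conjF h₂ hz x]
    have hc2f : 0 ≤ (1 / g x) ^ 2 * f x := by positivity
    calc f x / g x + (h₁ x - h₂ x)
        = 2 * (1 / g x) * f x + (1 / g x) ^ 2 * f x * (-g x) + h₁ x - h₂ x := by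
          field_simp; ring
      _ ≤ 2 * (1 / g x) * f x
            + (1 / g x) ^ 2 * f x * ((conjF g y).toReal - inner ℝ x y)
            + h₁ x + (conjF h₂ z).toReal - inner ℝ x z := by
          linarith [mul_le_mul_of_nonneg_left hconj_g hc2f]
  · exact le_top

theorem statement12_general (f g h₁ h₂ : En n → ℝ) (C : Set (En n))
    (hSA : StandingAssumptions f g h₁ h₂ C)
    (x0 : En n)
    (αlo αhi σ γ : ℝ)
    (A : AMPDA f g h₁ h₂ C x0 αlo αhi σ γ) :
    ∀ k : ℕ, 1 ≤ k →
      Qaux f g h₁ h₂ C (A.x (k + 1)) (A.y k) (A.z k) (A.c (k + 1))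
          + ((σ / 2 * ‖A.x (k + 1) - A.x k‖ ^ 2 : ℝ) : EReal)
        ≤ Qaux f g h₁ h₂ C (A.x k) (A.y (k - 1)) (A.z (k - 1)) (A.c k) := by
  intro k hk
  obtain ⟨m, rfl⟩ := Nat.exists_eq_add_of_le' hk
  rw [A.hc, A.hc, Nat.add_sub_cancel]
  exact (A.haccept (m + 1)).trans (Fobj_le_Qaux (A.hmem m) (hSA.1 _) _ _)

/-- sufficient descent of the auxiliary function `Q` along the AMPDA
iterates: for all `k ≥ 1`,
`Q(x^{k+1}, y^k, z^k, c_{k+1}) + (σ/2) ‖x^{k+1} - x^k‖² ≤ Q(x^k, y^{k-1}, z^{k-1}, c_k)`. -/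
theorem statement12 (f g h₁ h₂ : En n → ℝ) (C : Set (En n))
    (hSA : StandingAssumptions f g h₁ h₂ C)
    (x0 : En n) (hx0 : x0 ∈ Omeg g ∩ C)
    (αlo αhi σ γ : ℝ) (hαlo : 0 < αlo) (hαhi : αlo ≤ αhi)
    (hσ : 0 < σ) (hγ0 : 0 < γ) (hγ1 : γ < 1)
    (hcomp : IsCompact {x : En n | Fobj f g h₁ h₂ C x ≤ Fobj f g h₁ h₂ C x0})
    (A : AMPDA f g h₁ h₂ C x0 αlo αhi σ γ) :
    ∀ k : ℕ, 1 ≤ k →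
      Qaux f g h₁ h₂ C (A.x (k + 1)) (A.y k) (A.z k) (A.c (k + 1))
          + ((σ / 2 * ‖A.x (k + 1) - A.x k‖ ^ 2 : ℝ) : EReal)
        ≤ Qaux f g h₁ h₂ C (A.x k) (A.y (k - 1)) (A.z (k - 1)) (A.c k) :=
  statement12_general f g h₁ h₂ C hSA x0 αlo αhi σ γ A
end
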